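/- arXiv:1411.5450 — 3 statements merged into one kernel-verified Lean document; each statement's English description precedes it below -/
import Mathlib

section
/- Let (W,S) be a Coxeter group, J ⊆ S, and s ∈ S. If x, y ∈ W satisfy x^J ≤ y^J in the Bruhat order and sy < y, then (x')^J ≤ (sy)^J, where x' = min{x, sx}. -/
/-!
Write `s = s_i`. Two facts about minimal coset representatives drive the argument. First, Deodhar's
lemma: `(s z)^J` is `z^J` or `s z^J`, and it is `s z^J` when `s z^J < z^J`. Together with the
additivity `ℓ(z^J b) = ℓ(z^J) + ℓ(b)` for `b ∈ W_J`, it shows that if `z < s z` then `z^J < s z^J`,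
so `(x')^J` lies below both `x^J` and `s x^J`. Second, either `s y^J < y^J` and `(s y)^J = s y^J`,
or `y^J ≤ (s y)^J`. In the second case the claim follows by transitivity; in the first it follows
from the lifting property of the Bruhat order: if `u ≤ w` and `s w < w`, then `u ≤ s w` or
`s u ≤ s w`.

All of this rests on the strong exchange property, proved with the action of `W` on `W × ZMod 2`
in which `s_i` acts by `(u, a) ↦ (s_i u s_i, a + [u = s_i])`. Because this is an action of `W`,
the parity of the number of occurrences of `u` in the left inversion sequence of a word for `w`
depends only on `w`; for a reflection `u` and a reduced word it is odd exactly when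
`ℓ(u w) < ℓ(w)`.
-/

namespace Paper

variable {B : Type*} {W : Type*} [Group W] {M : CoxeterMatrix B}

/-- One step in the Bruhat order: multiply on the right by a reflection, increasing length. -/
def BruhatStep (cs : CoxeterSystem M W) (u v : W) : Prop :=
  ∃ t : W, cs.IsReflection t ∧ v = u * t ∧ cs.length u < cs.length v

/-- The Bruhat order on the Coxeter group `W`. -/
def BruhatLE (cs : CoxeterSystem M W) (u v : W) : Prop :=
  Relation.ReflTransGen (BruhatStep cs) u v

/-- Strict Bruhat order. -/
def BruhatLT (cs : CoxeterSystem M W) (u v : W) : Prop :=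
  BruhatLE cs u v ∧ u ≠ v

/-- The standard parabolic subgroup `W_J` generated by the simple reflections in `J`. -/
def parabolic (cs : CoxeterSystem M W) (J : Set B) : Subgroup W :=
  Subgroup.closure (cs.simple '' J)

/-- `m` is the minimal-length representative `x^J` of the coset `x W_J`. -/
def IsMinRep (cs : CoxeterSystem M W) (J : Set B) (x m : W) : Prop :=
  x⁻¹ * m ∈ parabolic cs J ∧
    ∀ y : W, x⁻¹ * y ∈ parabolic cs J → cs.length m ≤ cs.length y

open CoxeterSystem

lemma even_count_map_range_of_periodic {α : Type*} [BEq α] [LawfulBEq α] {g : ℕ → α} {n : ℕ}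
    (hg : Function.Periodic g n) (a : α) : Even (((List.range (2 * n)).map g).count a) := by
  rw [two_mul, List.range_add, List.map_append, List.map_map, List.count_append]
  have : g ∘ (n + ·) = g := funext fun k => by simpa [add_comm] using hg k
  rw [this]
  exact ⟨_, rfl⟩

lemma prod_map_alternatingWord {G : Type*} [Monoid G] (f : B → G) (i j : B) (k : ℕ) :
    ((alternatingWord i j (2 * k)).map f).prod = (f i * f j) ^ k := by
  induction k with
  | zero => simp [alternatingWord]
  | succ k ih =>
    rw [show 2 * (k + 1) = 2 * k + 1 + 1 by ring, alternatingWord_succ', alternatingWord_succ']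
    simp [ih, pow_succ', mul_assoc]

lemma leftInvSeq_alternatingWord (cs : CoxeterSystem M W) (i j : B) (p : ℕ) :
    cs.leftInvSeq (alternatingWord i j (2 * p)) =
      (List.range (2 * p)).map fun k => cs.simple i * (cs.simple j * cs.simple i) ^ k := by
  refine List.ext_getElem (by simp) fun k hk _ => ?_
  rw [getElem_leftInvSeq_alternatingWord cs i j p k (by simpa using hk),
    prod_alternatingWord_eq_mul_pow]
  simp [Nat.add_div_of_dvd_right]

section SignRepresentation

variable (cs : CoxeterSystem M W) [DecidableEq W]

noncomputable def signFlip (i : B) : Function.End (W × ZMod 2) :=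
  fun p => (cs.simple i * p.1 * cs.simple i, p.2 + if p.1 = cs.simple i then 1 else 0)

lemma prod_map_signFlip (ω : List B) (u : W) (a : ZMod 2) :
    (ω.map (signFlip cs)).prod (u, a) =
      (cs.wordProd ω * u * (cs.wordProd ω)⁻¹,
        a + ((cs.leftInvSeq ω).count (cs.wordProd ω * u * (cs.wordProd ω)⁻¹) : ZMod 2)) := by
  induction ω with
  | nil => simp; rfl
  | cons i ω ih =>
    set v := cs.wordProd ω * u * (cs.wordProd ω)⁻¹
    have hconj : cs.wordProd (i :: ω) * u * (cs.wordProd (i :: ω))⁻¹ =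
        MulAut.conj (cs.simple i) v := by
      simp [v, cs.wordProd_cons, mul_assoc]
    rw [List.map_cons, List.prod_cons]
    show signFlip cs i ((ω.map (signFlip cs)).prod (u, a)) = _
    rw [ih, hconj, leftInvSeq, List.count_cons,
      List.count_map_of_injective _ _ (MulAut.conj _).injective]
    simp [signFlip, add_assoc, mul_eq_one_iff_inv_eq, @eq_comm _ v]

lemma isLiftable_signFlip : M.IsLiftable (signFlip cs) := by
  intro i j
  -- The left inversion sequence of `(s_i s_j)^(M i j)` is periodic of period `M i j`, so every
  -- element occurs in it an even number of times.
  have hprod := prod_map_signFlip cs (alternatingWord i j (2 * M i j))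
  rw [prod_map_alternatingWord] at hprod
  have hπ : cs.wordProd (alternatingWord i j (2 * M i j)) = 1 := by
    simp [prod_alternatingWord_eq_mul_pow]
  have hperiodic : Function.Periodic
      (fun k => cs.simple i * (cs.simple j * cs.simple i) ^ k) (M i j) := fun k => by
    simp [pow_add]
  funext ⟨u, a⟩
  rw [hprod, hπ, leftInvSeq_alternatingWord, (ZMod.natCast_eq_zero_iff_even).2
    (even_count_map_range_of_periodic hperiodic _)]
  simp
  rfl

noncomputable def signRep : W →* Function.End (W × ZMod 2) :=
  cs.lift ⟨signFlip cs, isLiftable_signFlip cs⟩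

/-- The number of occurrences of `u` in the left inversion sequence of any word for `w`,
modulo `2`. -/
noncomputable def invParity (w u : W) : ZMod 2 := (signRep cs w (w⁻¹ * u * w, 0)).2

lemma signRep_wordProd (ω : List B) :
    signRep cs (cs.wordProd ω) = (ω.map (signFlip cs)).prod := by
  rw [wordProd, map_list_prod, List.map_map]
  congr 1
  exact List.map_congr_left fun i _ => cs.lift_apply_simple (isLiftable_signFlip cs) i

lemma invParity_wordProd (ω : List B) (u : W) :
    invParity cs (cs.wordProd ω) u = (cs.leftInvSeq ω).count u := by
  simp [invParity, signRep_wordProd, prod_map_signFlip, mul_assoc]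

lemma signRep_apply (w v : W) (a : ZMod 2) :
    signRep cs w (v, a) = (w * v * w⁻¹, a + invParity cs w (w * v * w⁻¹)) := by
  obtain ⟨ω, -, rfl⟩ := cs.exists_isReduced w
  rw [signRep_wordProd, prod_map_signFlip, invParity_wordProd]

lemma invParity_mul (a b u : W) :
    invParity cs (a * b) u = invParity cs a u + invParity cs b (a⁻¹ * u * a) := by
  have hb : b * ((a * b)⁻¹ * u * (a * b)) * b⁻¹ = a⁻¹ * u * a := by group
  have ha : a * (a⁻¹ * u * a) * a⁻¹ = u := by group
  calc invParity cs (a * b) u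
        = (signRep cs a (signRep cs b ((a * b)⁻¹ * u * (a * b), 0))).2 := by
          rw [invParity, map_mul]; rfl
    _ = _ := by rw [signRep_apply cs b, hb, signRep_apply cs a, ha, zero_add, add_comm]

lemma invParity_one (u : W) : invParity cs 1 u = 0 := by
  simpa using invParity_wordProd cs [] u

lemma invParity_simple (i : B) : invParity cs (cs.simple i) (cs.simple i) = 1 := by
  simpa using invParity_wordProd cs [i] (cs.simple i)

variable {cs}

lemma invParity_self_of_isReflection {t : W} (ht : cs.IsReflection t) :
    invParity cs t t = 1 := by
  obtain ⟨x, i, rfl⟩ := ht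
  -- Expand `invParity (x s x⁻¹)` and `invParity (x x⁻¹) = 0` by the cocycle rule
  -- `invParity_mul`.
  have h₁ := invParity_mul cs x x⁻¹ (x * cs.simple i * x⁻¹)
  have h₂ := invParity_mul cs (x * cs.simple i) x⁻¹ (x * cs.simple i * x⁻¹)
  have h₃ := invParity_mul cs x (cs.simple i) (x * cs.simple i * x⁻¹)
  have hs := invParity_simple cs i
  simp only [mul_inv_cancel, invParity_one, mul_inv_rev, inv_simple] at h₁ h₂ h₃
  simp only [show x⁻¹ * (x * cs.simple i * x⁻¹) * x = cs.simple i by group,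
    show cs.simple i * x⁻¹ * (x * cs.simple i * x⁻¹) * (x * cs.simple i) = cs.simple i by
      group; simp] at h₁ h₂ h₃
  linear_combination h₂ + h₃ - h₁ + hs

lemma mem_leftInvSeq_of_invParity_eq_one {ω : List B} {u : W}
    (h : invParity cs (cs.wordProd ω) u = 1) : u ∈ cs.leftInvSeq ω := by
  rw [invParity_wordProd] at h
  refine List.count_pos_iff.mp (Nat.pos_of_ne_zero fun h0 => ?_)
  simp [h0] at h

lemma length_mul_lt_of_invParity_eq_one {w u : W} (h : invParity cs w u = 1) :
    cs.length (u * w) < cs.length w := by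
  obtain ⟨ω, hω, rfl⟩ := cs.exists_isReduced w
  exact (cs.isLeftInversion_of_mem_leftInvSeq hω (mem_leftInvSeq_of_invParity_eq_one h)).2

lemma invParity_eq_one_of_length_mul_lt {w u : W} (hu : cs.IsReflection u)
    (h : cs.length (u * w) < cs.length w) : invParity cs w u = 1 := by
  by_contra hne
  have h0 : invParity cs w u = 0 := by
    generalize invParity cs w u = x at hne; revert x; decide
  have h1 : invParity cs (u * w) u = 1 := by
    rw [invParity_mul, invParity_self_of_isReflection hu, inv_mul_cancel, one_mul, h0, add_zero]
  have := length_mul_lt_of_invParity_eq_one h1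
  rw [← mul_assoc, hu.mul_self, one_mul] at this
  omega

end SignRepresentation

section Exchange

variable {cs : CoxeterSystem M W}

theorem exists_eraseIdx_of_length_mul_lt {ω : List B} {t : W} (ht : cs.IsReflection t)
    (h : cs.length (cs.wordProd ω * t) < cs.length (cs.wordProd ω)) :
    ∃ j < ω.length, cs.wordProd ω * t = cs.wordProd (ω.eraseIdx j) := by
  classical
  set u := cs.wordProd ω * t * (cs.wordProd ω)⁻¹
  have hu : u * cs.wordProd ω = cs.wordProd ω * t := by simp [u]
  rw [← hu] at h ⊢
  obtain ⟨j, hj, hju⟩ := List.mem_iff_getElem.mp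
    (mem_leftInvSeq_of_invParity_eq_one (invParity_eq_one_of_length_mul_lt (ht.conj _) h))
  rw [length_leftInvSeq] at hj
  refine ⟨j, hj, ?_⟩
  rw [← getD_leftInvSeq_mul_wordProd, List.getD_eq_getElem _ _ (by simpa using hj), hju]

lemma exchange_of_length_mul_mul_lt {u v t : W} (ht : cs.IsReflection t)
    (h : cs.length (u * v * t) < cs.length (u * v)) :
    cs.length (v * t) < cs.length v ∨
      ∃ u', cs.length u' < cs.length u ∧ u * v * t = u' * v := by
  obtain ⟨α, hα, rfl⟩ := cs.exists_isReduced u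
  obtain ⟨β, hβ, rfl⟩ := cs.exists_isReduced v
  rw [← wordProd_append] at h ⊢
  obtain ⟨j, hj, hexch⟩ := exists_eraseIdx_of_length_mul_lt ht h
  rcases lt_or_ge j α.length with hjα | hjα
  · refine Or.inr ⟨cs.wordProd (α.eraseIdx j), ?_, ?_⟩
    · have := List.length_eraseIdx_add_one hjα
      have := cs.length_wordProd_le (α.eraseIdx j)
      rw [hα]; omega
    · rw [hexch, List.eraseIdx_append_of_lt_length hjα, wordProd_append]
  · left
    rw [List.eraseIdx_append_of_length_le hjα, wordProd_append, wordProd_append, mul_assoc,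
      mul_right_inj] at hexch
    rw [List.length_append] at hj
    have := List.length_eraseIdx_add_one (show j - α.length < β.length by omega)
    have := cs.length_wordProd_le (β.eraseIdx (j - α.length))
    rw [hexch, hβ]; omega

lemma exchange_of_length_simple_mul_mul_lt {v t : W} {i : B} (ht : cs.IsReflection t)
    (h : cs.length (cs.simple i * v * t) < cs.length (cs.simple i * v)) :
    cs.length (v * t) < cs.length v ∨ cs.simple i * v * t = v := by
  refine (exchange_of_length_mul_mul_lt ht h).imp_right fun ⟨u', hu', hexch⟩ => ?_
  rw [cs.length_simple, Nat.lt_one_iff, length_eq_zero_iff] at hu'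
  rw [hexch, hu', one_mul]

end Exchange

section Bruhat

variable {cs : CoxeterSystem M W} {u v w : W} {i : B}

lemma bruhatLE_refl (w : W) : BruhatLE cs w w := Relation.ReflTransGen.refl

lemma BruhatLE.trans (h₁ : BruhatLE cs u v) (h₂ : BruhatLE cs v w) : BruhatLE cs u w :=
  Relation.ReflTransGen.trans h₁ h₂

lemma BruhatStep.bruhatLE (h : BruhatStep cs u v) : BruhatLE cs u v :=
  Relation.ReflTransGen.single h

lemma BruhatLE.length_le (h : BruhatLE cs u v) : cs.length u ≤ cs.length v := by
  induction h with
  | refl => exact le_rfl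
  | tail _ hstep ih =>
    obtain ⟨t, -, rfl, hlt⟩ := hstep
    omega

lemma bruhatLE_simple_mul (h : cs.length w < cs.length (cs.simple i * w)) :
    BruhatLE cs w (cs.simple i * w) :=
  BruhatStep.bruhatLE ⟨w⁻¹ * cs.simple i * w, ⟨w⁻¹, i, by simp⟩, by group, h⟩

lemma BruhatStep.bruhatLE_simple_mul (hstep : BruhatStep cs v w)
    (hv : cs.length v < cs.length (cs.simple i * v)) : BruhatLE cs v (cs.simple i * w) := by
  obtain ⟨t, ht, rfl, hlt⟩ := hstep
  -- Either `s v → s w` is again a Bruhat step, or strong exchange forces `v = s w`.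
  by_cases hlen : cs.length (cs.simple i * v) < cs.length (cs.simple i * (v * t))
  · exact (bruhatLE_simple_mul hv).trans
      (BruhatStep.bruhatLE ⟨t, ht, (mul_assoc _ _ _).symm, hlen⟩)
  · have hvt : cs.simple i * (cs.simple i * (v * t)) * t = v := by
      rw [simple_mul_simple_cancel_left, mul_assoc, ht.mul_self, mul_one]
    rcases exchange_of_length_simple_mul_mul_lt (v := cs.simple i * (v * t)) ht
      (by rwa [hvt, simple_mul_simple_cancel_left]) with h | h
    · rw [mul_assoc, mul_assoc v, ht.mul_self, mul_one] at h
      exact absurd h hlen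
    · rw [hvt] at h
      rw [← h]
      exact bruhatLE_refl v

theorem BruhatLE.lift (h : BruhatLE cs u w) (hw : cs.length (cs.simple i * w) < cs.length w) :
    BruhatLE cs u (cs.simple i * w) ∨ BruhatLE cs (cs.simple i * u) (cs.simple i * w) := by
  induction h with
  | refl => exact Or.inr (bruhatLE_refl _)
  | @tail v w huv hstep ih =>
    rcases lt_or_gt_of_ne (cs.length_simple_mul_ne v i) with hv | hv
    · obtain ⟨t, ht, rfl, hlt⟩ := hstep
      have hs : BruhatLE cs (cs.simple i * v) (cs.simple i * (v * t)) := by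
        refine BruhatStep.bruhatLE ⟨t, ht, (mul_assoc _ _ _).symm, ?_⟩
        rcases cs.length_simple_mul v i with h₁ | h₁ <;>
          rcases cs.length_simple_mul (v * t) i with h₂ | h₂ <;> omega
      exact (ih hv).imp (·.trans hs) (·.trans hs)
    · exact Or.inl (huv.trans (hstep.bruhatLE_simple_mul hv))

end Bruhat

section MinRep

variable {cs : CoxeterSystem M W} {J : Set B} {z z' m m' μ y b : W} {i : B}

lemma simple_mem_parabolic {j : B} (hj : j ∈ J) : cs.simple j ∈ parabolic cs J :=
  Subgroup.subset_closure ⟨j, hj, rfl⟩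

lemma IsMinRep.inv_mul_mem_iff (hm : IsMinRep cs J z m) :
    z⁻¹ * y ∈ parabolic cs J ↔ m⁻¹ * y ∈ parabolic cs J := by
  rw [show z⁻¹ * y = z⁻¹ * m * (m⁻¹ * y) by group]
  exact Subgroup.mul_mem_cancel_left _ hm.1

lemma IsMinRep.length_le (hm : IsMinRep cs J z m) (hy : m⁻¹ * y ∈ parabolic cs J) :
    cs.length m ≤ cs.length y :=
  hm.2 y (hm.inv_mul_mem_iff.2 hy)

lemma IsMinRep.length_mul_simple (hm : IsMinRep cs J z m) (hb : b ∈ parabolic cs J) {j : B}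
    (hj : j ∈ J) (hadd : cs.length (m * b) = cs.length m + cs.length b) :
    cs.length (m * (b * cs.simple j)) = cs.length m + cs.length (b * cs.simple j) := by
  have hsub := cs.length_mul_le m (b * cs.simple j)
  rw [← mul_assoc] at hsub ⊢
  rcases cs.length_mul_simple b j with hb' | hb' <;>
    rcases cs.length_mul_simple (m * b) j with hmb | hmb
  · omega
  · -- Exchange in `m b s_j < m b` cannot delete a letter of `b`, and deleting one of `m` would
    -- give a shorter element of `m W_J`.
    rcases exchange_of_length_mul_mul_lt (cs.isReflection_simple j)
      (by omega : cs.length (m * b * cs.simple j) < cs.length (m * b)) with h | ⟨u, hu, hexch⟩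
    · omega
    · have hmu : m⁻¹ * u = b * cs.simple j * b⁻¹ := by
        rw [eq_mul_inv_of_mul_eq hexch.symm]; group
      have := hm.length_le (y := u)
        (hmu ▸ mul_mem (mul_mem hb (simple_mem_parabolic hj)) (inv_mem hb))
      omega
  · omega
  · omega

lemma IsMinRep.length_mul (hm : IsMinRep cs J z m) (hb : b ∈ parabolic cs J) :
    cs.length (m * b) = cs.length m + cs.length b := by
  induction hb using Subgroup.closure_induction_right with
  | one => simp
  | mul_right b hb _ hj ih =>
    obtain ⟨j, hj, rfl⟩ := hj
    exact hm.length_mul_simple hb hj ih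
  | mul_inv_cancel b hb _ hj ih =>
    obtain ⟨j, hj, rfl⟩ := hj
    rw [inv_simple]
    exact hm.length_mul_simple hb hj ih

lemma IsMinRep.eq_of_length_le (hm : IsMinRep cs J z m) (hy : m⁻¹ * y ∈ parabolic cs J)
    (hl : cs.length y ≤ cs.length m) : y = m := by
  have h := hm.length_mul hy
  rw [mul_inv_cancel_left] at h
  exact (inv_mul_eq_one.mp (cs.length_eq_zero_iff.mp (by omega))).symm

lemma IsMinRep.unique (hm : IsMinRep cs J z m) (hm' : IsMinRep cs J z m') : m' = m :=
  hm.eq_of_length_le (hm.inv_mul_mem_iff.1 hm'.1) (hm'.2 m hm.1)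

lemma IsMinRep.simple_mul (hm : IsMinRep cs J z m)
    (h : cs.length (cs.simple i * m) < cs.length m) :
    IsMinRep cs J (cs.simple i * z) (cs.simple i * m) := by
  refine ⟨by simpa [mul_assoc] using hm.1, fun y hy => ?_⟩
  have := hm.2 (cs.simple i * y) (by simpa [mul_assoc] using hy)
  rcases cs.length_simple_mul m i with h₁ | h₁ <;>
    rcases cs.length_simple_mul y i with h₂ | h₂ <;> omega

lemma IsMinRep.length_simple_mul_lt (hm : IsMinRep cs J z m)
    (h : cs.length (cs.simple i * m) < cs.length m) :
    cs.length (cs.simple i * z) < cs.length z := by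
  have h₁ := hm.length_mul (b := m⁻¹ * z) (by simpa using inv_mem hm.1)
  have h₂ := cs.length_mul_le (cs.simple i * m) (m⁻¹ * z)
  rw [mul_inv_cancel_left] at h₁
  rw [mul_assoc, mul_inv_cancel_left] at h₂
  omega

lemma IsMinRep.eq_or_eq_simple_mul (hm : IsMinRep cs J z m)
    (hμ : IsMinRep cs J (cs.simple i * z) μ) (h : cs.length m < cs.length (cs.simple i * m)) :
    μ = m ∨ μ = cs.simple i * m := by
  by_cases hlen : cs.length (cs.simple i * m) ≤ cs.length μ
  · exact Or.inr (hμ.eq_of_length_le (hμ.inv_mul_mem_iff.1 (by simpa [mul_assoc] using hm.1))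
      hlen).symm
  obtain ⟨b, hb, hμb⟩ : ∃ b ∈ parabolic cs J, cs.simple i * μ = m * b :=
    ⟨m⁻¹ * (cs.simple i * μ), hm.inv_mul_mem_iff.1 (by simpa [mul_assoc] using hμ.1),
      by group⟩
  -- Now `ℓ b ≤ 1`; if `b = s_k`, exchange in `s m s_k < s m` gives `μ = s m s_k = m`.
  have hlb := hm.length_mul hb
  rw [← hμb] at hlb
  have := cs.length_simple_mul μ i
  have := cs.length_simple_mul m i
  rcases Nat.le_one_iff_eq_zero_or_eq_one.mp (by omega : cs.length b ≤ 1) with hb₀ | hb₁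
  · rw [cs.length_eq_zero_iff.mp hb₀, mul_one] at hμb
    exact Or.inr (by rw [← hμb, simple_mul_simple_cancel_left])
  · obtain ⟨k, rfl⟩ := cs.length_eq_one_iff.mp hb₁
    have hμ' : μ = cs.simple i * m * cs.simple k := by
      rw [mul_assoc, ← hμb, simple_mul_simple_cancel_left]
    rcases exchange_of_length_simple_mul_mul_lt (v := m) (cs.isReflection_simple k)
      (by rw [← hμ']; omega) with h' | h'
    · have := hm.length_le (y := m * cs.simple k) (by simpa using hb)
      omega
    · exact Or.inl (hμ'.trans h')

lemma IsMinRep.bruhatLE_and_bruhatLE_simple_mul (hm' : IsMinRep cs J z' m')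
    (hm : IsMinRep cs J z m)
    (hz : z = z' ∨ z = cs.simple i * z') (hlt : cs.length z' < cs.length (cs.simple i * z')) :
    BruhatLE cs m' m ∧ BruhatLE cs m' (cs.simple i * m) := by
  have hm'lt : cs.length m' < cs.length (cs.simple i * m') :=
    lt_of_le_of_ne (not_lt.1 fun h => (hm'.length_simple_mul_lt h).not_gt hlt)
      (cs.length_simple_mul_ne m' i).symm
  obtain rfl | rfl : m = m' ∨ m = cs.simple i * m' := by
    rcases hz with rfl | rfl
    · exact Or.inl (hm'.unique hm)
    · exact hm'.eq_or_eq_simple_mul hm hm'lt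
  · exact ⟨bruhatLE_refl m, bruhatLE_simple_mul hm'lt⟩
  · rw [simple_mul_simple_cancel_left]
    exact ⟨bruhatLE_simple_mul hm'lt, bruhatLE_refl m'⟩

lemma IsMinRep.eq_simple_mul_or_bruhatLE (hm : IsMinRep cs J z m)
    (hμ : IsMinRep cs J (cs.simple i * z) μ) :
    (μ = cs.simple i * m ∧ cs.length (cs.simple i * m) < cs.length m) ∨ BruhatLE cs m μ := by
  rcases lt_or_gt_of_ne (cs.length_simple_mul_ne m i) with h | h
  · exact Or.inl ⟨(hm.simple_mul h).unique hμ, h⟩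
  · rcases hm.eq_or_eq_simple_mul hμ h with rfl | rfl
    · exact Or.inr (bruhatLE_refl μ)
    · exact Or.inr (bruhatLE_simple_mul h)

end MinRep

theorem minRep_le_of_simple_mul_general (cs : CoxeterSystem M W) (J : Set B) (i : B)
    (x y x' mx my mx' msy : W)
    (hmx : IsMinRep cs J x mx) (hmy : IsMinRep cs J y my)
    (hxy : BruhatLE cs mx my)
    (hx'def : (x' = x ∨ x' = cs.simple i * x) ∧
      BruhatLE cs x' x ∧ BruhatLE cs x' (cs.simple i * x))
    (hmx' : IsMinRep cs J x' mx') (hmsy : IsMinRep cs J (cs.simple i * y) msy) :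
    BruhatLE cs mx' msy := by
  obtain ⟨hx', hx'x, hx'sx⟩ := hx'def
  have hx : x = x' ∨ x = cs.simple i * x' := by
    rcases hx' with rfl | rfl
    · exact Or.inl rfl
    · exact Or.inr (simple_mul_simple_cancel_left _ _).symm
  have hlt : cs.length x' < cs.length (cs.simple i * x') := by
    have hle : BruhatLE cs x' (cs.simple i * x') := by
      rcases hx with rfl | rfl
      exacts [hx'sx, hx'x]
    exact lt_of_le_of_ne hle.length_le (cs.length_simple_mul_ne x' i).symm
  obtain ⟨hmx'_le, hmx'_le'⟩ := hmx'.bruhatLE_and_bruhatLE_simple_mul hmx hx hlt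
  rcases hmy.eq_simple_mul_or_bruhatLE hmsy with ⟨rfl, hmy_lt⟩ | hmy_le
  · rcases hxy.lift hmy_lt with h | h
    exacts [hmx'_le.trans h, hmx'_le'.trans h]
  · exact hmx'_le.trans (hxy.trans hmy_le)

/-- Lemma: if `x^J ≤ y^J` and `sy < y`, then `(x')^J ≤ (sy)^J`
where `x' = min{x, sx}`. -/
theorem minRep_le_of_simple_mul (cs : CoxeterSystem M W) (J : Set B) (i : B)
    (x y x' mx my mx' msy : W)
    (hmx : IsMinRep cs J x mx) (hmy : IsMinRep cs J y my)
    (hxy : BruhatLE cs mx my)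
    (hsy : BruhatLT cs (cs.simple i * y) y)
    (hx'def : (x' = x ∨ x' = cs.simple i * x) ∧
      BruhatLE cs x' x ∧ BruhatLE cs x' (cs.simple i * x))
    (hmx' : IsMinRep cs J x' mx') (hmsy : IsMinRep cs J (cs.simple i * y) msy) :
    BruhatLE cs mx' msy :=
  minRep_le_of_simple_mul_general cs J i x y x' mx my mx' msy hmx hmy hxy hx'def hmx' hmsy

end Paper
end

section
/- Let (W,S) be a Coxeter group, J ⊆ S, and x, y ∈ W. If x^J ≤ y^J in the Bruhat order, then x ≤ yu for some u ∈ W_J. -/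
namespace Paper

variable {B : Type*} {W : Type*} [Group W] {M : CoxeterMatrix B}

/-!
The key is the lifting property: if `u ≤ v` and `s` is simple, then `us ≤ v` or `us ≤ vs`.
Applied letter by letter to a word in `J` for `mx⁻¹ x`, it turns `mx ≤ my` into
`x ≤ my a'` with `a' ∈ W_J`.

The lifting property follows by induction along a Bruhat chain from a single exchange fact:
if `a → b = at` is a Bruhat step and `a ≠ bs`, then `as → bs` is one too. When `bs < b`,
this needs that a right inversion `t ≠ s` of `b = (bs)s` gives the right inversion `sts`
of `bs`. That is read off from the reflection cocycle `η(w, t) ∈ ZMod 2` (`reflParity`),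
the parity of the number of occurrences of `t` in the right inversion sequence of any word
for `w`; it is well defined because `s ↦ ((t, ε) ↦ (sts, ε + [t = s]))` satisfies the
Coxeter relations, and `η(w, t) = 1` exactly when `t` is a right inversion of `w`.
-/

open CoxeterSystem

section Parity

open scoped Classical

variable (cs : CoxeterSystem M W)

local notation "s" => cs.simple
local notation "π" => cs.wordProd
local notation "ℓ" => cs.length

noncomputable def simplePerm (i : B) : Function.End (W × ZMod 2) :=
  fun p => (s i * p.1 * s i, p.2 + if p.1 = s i then 1 else 0)

lemma simplePerm_smul (i : B) (w : W) (z : ZMod 2) :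
    simplePerm cs i • (w, z) = (s i * w * s i, z + if w = s i then 1 else 0) :=
  rfl

lemma simplePerm_mul_pow_smul (i j : B) (m : ℕ) (w : W) (z : ZMod 2) :
    (simplePerm cs i * simplePerm cs j) ^ m • (w, z) =
      ((s i * s j) ^ m * w * ((s i * s j) ^ m)⁻¹,
        z + ∑ r ∈ Finset.range (2 * m), if w = s j * (s i * s j) ^ r then 1 else 0) := by
  set p := s i * s j
  have hconj : ∀ (r : ℕ) (w : W), p * w * p⁻¹ = s j * p ^ r ↔ w = s j * p ^ (r + 2) := by
    intro r w
    have key : p⁻¹ * (s j * p ^ r) * p = s j * p ^ (r + 2) := by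
      have hp : p⁻¹ * s j = s j * p := by simp only [p, mul_inv_rev, inv_simple, mul_assoc]
      calc p⁻¹ * (s j * p ^ r) * p = (p⁻¹ * s j) * (p ^ r * p) := by simp only [mul_assoc]
        _ = s j * p ^ (r + 2) := by rw [hp, ← pow_succ, mul_assoc, ← pow_succ']
    constructor
    · rintro h; rw [← key, ← h]; group
    · rintro rfl; rw [← key]; group
  have hconj_one : ∀ w : W, s j * w * s j = s i ↔ w = s j * p ^ 1 := by
    intro w
    simp only [p, pow_one]
    constructor
    · rintro h; rw [← h]; simp [mul_assoc]
    · rintro rfl; simp [mul_assoc]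
  induction m generalizing w z with
  | zero => simp
  | succ m ih =>
    have hpw : s i * (s j * w * s j) * s i = p * w * p⁻¹ := by
      simp only [p, mul_inv_rev, inv_simple]; group
    rw [pow_succ, mul_smul, mul_smul, simplePerm_smul, simplePerm_smul, hpw, ih, Prod.mk.injEq]
    refine ⟨by group, ?_⟩
    rw [Nat.mul_succ, Finset.sum_range_succ', Finset.sum_range_succ']
    simp only [hconj, hconj_one, pow_zero, mul_one]
    ring

lemma isLiftable_simplePerm : M.IsLiftable (simplePerm cs) := by
  intro i j
  funext ⟨w, z⟩
  show (simplePerm cs i * simplePerm cs j) ^ M i j • (w, z) = (w, z)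
  rw [simplePerm_mul_pow_smul, cs.simple_mul_simple_pow, two_mul, Finset.sum_range_add]
  simp only [pow_add, cs.simple_mul_simple_pow, one_mul, CharTwo.add_self_eq_zero, add_zero,
    mul_one, inv_one]

noncomputable def reflRep : W →* Function.End (W × ZMod 2) :=
  cs.lift ⟨simplePerm cs, isLiftable_simplePerm cs⟩

lemma reflRep_simple (i : B) : reflRep cs (s i) = simplePerm cs i :=
  cs.lift_apply_simple (isLiftable_simplePerm cs) i

lemma reflRep_wordProd_smul (ω : List B) (t : W) (z : ZMod 2) :
    reflRep cs (π ω) • (t, z) =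
      (π ω * t * (π ω)⁻¹, z + ((cs.rightInvSeq ω).count t : ZMod 2)) := by
  induction ω generalizing z with
  | nil => simp
  | cons i ω ih =>
    rw [wordProd_cons, map_mul, mul_smul, ih, reflRep_simple, simplePerm_smul, rightInvSeq,
      List.count_cons, Prod.mk.injEq]
    refine ⟨by simp only [mul_inv_rev, inv_simple]; group, ?_⟩
    have hcond : π ω * t * (π ω)⁻¹ = s i ↔ ((π ω)⁻¹ * s i * π ω == t) = true := by
      rw [beq_iff_eq]
      constructor
      · rintro h; rw [← h]; group
      · rintro rfl; group
    simp only [hcond]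
    push_cast
    ring

noncomputable def reflParity (w t : W) : ZMod 2 := (reflRep cs w • (t, 0)).2

lemma reflRep_smul (w t : W) (z : ZMod 2) :
    reflRep cs w • (t, z) = (w * t * w⁻¹, z + reflParity cs w t) := by
  obtain ⟨ω, rfl⟩ := cs.wordProd_surjective w
  rw [reflParity, reflRep_wordProd_smul, reflRep_wordProd_smul, zero_add]

lemma reflParity_wordProd (ω : List B) (t : W) :
    reflParity cs (π ω) t = (cs.rightInvSeq ω).count t := by
  rw [reflParity, reflRep_wordProd_smul, zero_add]

lemma reflParity_mul (a b t : W) :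
    reflParity cs (a * b) t = reflParity cs b t + reflParity cs a (b * t * b⁻¹) := by
  rw [reflParity, map_mul, mul_smul, reflRep_smul, reflRep_smul, zero_add]

lemma reflParity_inv (w t : W) : reflParity cs w⁻¹ t = reflParity cs w (w⁻¹ * t * w) := by
  have h := reflParity_mul cs w w⁻¹ t
  rwa [mul_inv_cancel, inv_inv, reflParity, map_one, one_smul, eq_comm, CharTwo.add_eq_zero] at h

lemma reflParity_simple (i : B) (t : W) :
    reflParity cs (s i) t = if t = s i then 1 else 0 := by
  rw [reflParity, reflRep_simple, simplePerm_smul, zero_add]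

lemma reflParity_self {t : W} (ht : cs.IsReflection t) : reflParity cs t t = 1 := by
  obtain ⟨v, i, rfl⟩ := ht
  have hconj : v⁻¹ * (v * s i * v⁻¹) * v = s i := by group
  rw [reflParity_mul, inv_inv, hconj, reflParity_inv, hconj, reflParity_mul, reflParity_simple,
    if_pos rfl, inv_simple, simple_mul_simple_cancel_right, add_left_comm,
    CharTwo.add_self_eq_zero, add_zero]

lemma isRightInversion_iff_reflParity {w t : W} :
    cs.IsRightInversion w t ↔ cs.IsReflection t ∧ reflParity cs w t = 1 := by
  have length_lt : ∀ w : W, reflParity cs w t = 1 → ℓ (w * t) < ℓ w := by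
    intro w hw
    obtain ⟨ω, hω, rfl⟩ := cs.exists_isReduced w
    rw [reflParity_wordProd] at hw
    have hmem : t ∈ cs.rightInvSeq ω :=
      List.count_pos_iff.mp (ZMod.natCast_eq_one_iff_odd.mp hw).pos
    exact (cs.isRightInversion_of_mem_rightInvSeq hω hmem).2
  refine ⟨fun ⟨ht, hlt⟩ => ⟨ht, ?_⟩, fun ⟨ht, hw⟩ => ⟨ht, length_lt w hw⟩⟩
  rcases (show ∀ x : ZMod 2, x = 0 ∨ x = 1 by decide) (reflParity cs w t) with hw0 | hw1
  · have hwt : reflParity cs (w * t) t = 1 := by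
      rw [reflParity_mul, reflParity_self cs ht, ht.mul_self, one_mul, ht.inv, hw0, add_zero]
    have := length_lt _ hwt
    rw [mul_assoc, ht.mul_self, mul_one] at this
    omega
  · exact hw1

lemma isRightInversion_mul_simple_iff {w t : W} {i : B} (ht : t ≠ s i) :
    cs.IsRightInversion (w * s i) t ↔ cs.IsRightInversion w (s i * t * s i) := by
  rw [isRightInversion_iff_reflParity, isRightInversion_iff_reflParity, reflParity_mul,
    reflParity_simple, if_neg ht, zero_add, inv_simple, ← cs.isReflection_conj_iff (s i) t,
    inv_simple]

end Parity

section Bruhat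

variable {cs : CoxeterSystem M W}

local notation "s" => cs.simple

lemma BruhatStep.mul_simple {a b : W} {i : B} (h : BruhatStep cs a b) (hne : a ≠ b * s i) :
    BruhatStep cs (a * s i) (b * s i) := by
  obtain ⟨t, ht, rfl, hlt⟩ := h
  refine ⟨s i * t * s i, by simpa using ht.conj (s i), by simp [mul_assoc], ?_⟩
  rcases (cs.length_mul_simple_ne (a * t) i).lt_or_gt with hdesc | hasc
  · have hts : t ≠ s i := by rintro rfl; simp at hne
    have hinv : cs.IsRightInversion (a * t * s i * s i) t := by
      rw [simple_mul_simple_cancel_right]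
      exact ⟨ht, by rwa [mul_assoc, ht.mul_self, mul_one]⟩
    have hconj : a * t * s i * (s i * t * s i) = a * s i :=
      calc _ = a * (t * t) * s i := by simp [mul_assoc]
        _ = a * s i := by rw [ht.mul_self, mul_one]
    simpa [hconj] using ((isRightInversion_mul_simple_iff cs hts).mp hinv).2
  · rcases cs.length_mul_simple a i with h | h <;> omega

lemma BruhatLE.mul_simple_le_or_le_mul_simple {u v : W} (h : BruhatLE cs u v) (i : B) :
    BruhatLE cs (u * s i) v ∨ BruhatLE cs (u * s i) (v * s i) := by
  induction h with
  | refl => exact .inr .refl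
  | @tail v' v _ hstep ih =>
    rcases ih with hle | hle
    · exact .inl (hle.tail hstep)
    · by_cases hv : v' = v * s i
      · rw [hv, simple_mul_simple_cancel_right] at hle
        exact .inl hle
      · exact .inr (hle.tail (hstep.mul_simple hv))

lemma BruhatLE.exists_mul_le_mul_parabolic {J : Set B} {u v a : W} (h : BruhatLE cs u v)
    (ha : a ∈ parabolic cs J) : ∃ a' ∈ parabolic cs J, BruhatLE cs (u * a) (v * a') := by
  have step : ∀ x, ∀ i ∈ J, (∃ a' ∈ parabolic cs J, BruhatLE cs (u * x) (v * a')) →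
      ∃ a' ∈ parabolic cs J, BruhatLE cs (u * (x * s i)) (v * a') := by
    rintro x i hi ⟨a', ha', hle⟩
    have hsi : s i ∈ parabolic cs J := Subgroup.subset_closure ⟨i, hi, rfl⟩
    rw [← mul_assoc]
    rcases hle.mul_simple_le_or_le_mul_simple i with hle' | hle'
    · exact ⟨a', ha', hle'⟩
    · exact ⟨a' * s i, mul_mem ha' hsi, by rwa [← mul_assoc]⟩
  induction ha using Subgroup.closure_induction_right with
  | one => exact ⟨1, one_mem _, by simpa using h⟩
  | mul_right x _ y hy ih =>
    obtain ⟨i, hi, rfl⟩ := hy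
    exact step x i hi ih
  | mul_inv_cancel x _ y hy ih =>
    obtain ⟨i, hi, rfl⟩ := hy
    rw [inv_simple]
    exact step x i hi ih

end Bruhat

/-- If `x^J ≤ y^J` in the Bruhat order, then `x ≤ yu` for some `u ∈ W_J`. -/
theorem le_mul_of_minRep_le (cs : CoxeterSystem M W) (J : Set B)
    (x y mx my : W) (hmx : IsMinRep cs J x mx) (hmy : IsMinRep cs J y my)
    (h : BruhatLE cs mx my) :
    ∃ u ∈ parabolic cs J, BruhatLE cs x (y * u) := by
  obtain ⟨a, ha, hle⟩ := h.exists_mul_le_mul_parabolic (inv_mem hmx.1)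
  refine ⟨y⁻¹ * my * a, mul_mem hmy.1 ha, ?_⟩
  simpa [mul_assoc] using hle

end Paper
end

section
/- Let μ be a dominant cocharacter. For every w ∈ W, the translation element t_{wμ} is strongly admissible, i.e., t_{wμ} ∈ Adm^{st}(μ). More precisely, for every u ∈ W and every ν ∈ X_* dominant with ν ⪯ μ in the dominance order, there is a sequence of affine reflections, each in the u-opposite direction, carrying the alcove t_{uμ}(ā) to t_{ν}(ā). -/
open scoped Classical

namespace Paper

variable (V : Type*) [AddCommGroup V] [Module ℝ V]

/-- A based reduced root system `Σ = (X^*, X_*, R, R^∨, Π)` realized inside the real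
vector space `V = X_* ⊗ ℝ`: roots are linear functionals, coroots are vectors,
`X` is the cocharacter lattice, and `isPos` singles out the positive roots. -/
structure BasedRootSystem where
  /-- index set of the (finitely many) roots -/
  ι : Type
  fintype_ι : Fintype ι
  root : ι → V →ₗ[ℝ] ℝ
  coroot : ι → V
  /-- the positive roots -/
  isPos : ι → Prop
  root_coroot_self : ∀ i, root i (coroot i) = 2
  root_ne : ∀ i, root i ≠ 0
  /-- reduced: proportional roots are equal or opposite -/
  reduced : ∀ i j (c : ℝ), root i = c • root j → root i = root j ∨ root i = - root j
  /-- the cocharacter lattice `X_*` -/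
  X : AddSubgroup V
  coroot_mem : ∀ i, coroot i ∈ X
  root_int : ∀ i, ∀ x ∈ X, ∃ n : ℤ, root i x = n
  pos_or_neg : ∀ i, isPos i ∨ ∃ j, isPos j ∧ root i = - root j ∧ coroot i = - coroot j
  /-- simple reflections permute the roots and coroots compatibly -/
  refl_root : ∀ i j, ∃ k, root k = root j - root j (coroot i) • root i ∧
      coroot k = coroot j - root i (coroot j) • coroot i

attribute [instance] BasedRootSystem.fintype_ι

namespace BasedRootSystem

variable {V} (P : BasedRootSystem V)

/-- the finite reflection `s_α` -/
def sLin (i : P.ι) : V ≃ₗ[ℝ] V := Module.reflection (P.root_coroot_self i)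

/-- the finite Weyl group `W`, as a subgroup of the linear automorphisms of `V` -/
def Wfin : Subgroup (V ≃ₗ[ℝ] V) := Subgroup.closure (Set.range P.sLin)

/-- the affine reflection `s_{α + k}`, `x ↦ x - (⟨α,x⟩ + k)α^∨` -/
def sAff (i : P.ι) (k : ℤ) : V ≃ᵃ[ℝ] V :=
  (P.sLin i).toAffineEquiv.trans (AffineEquiv.constVAdd ℝ V (-(k : ℝ) • P.coroot i))

/-- the translation `t_v` -/
def transl (v : V) : V ≃ᵃ[ℝ] V := AffineEquiv.constVAdd ℝ V v

/-- the affine Weyl group `W_aff` -/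
def Waff : Subgroup (V ≃ᵃ[ℝ] V) := Subgroup.closure {g | ∃ i k, g = P.sAff i k}

/-- the extended affine Weyl group `W̃ = X_* ⋊ W` -/
def Wext : Subgroup (V ≃ᵃ[ℝ] V) :=
  Subgroup.closure ({g | ∃ i k, g = P.sAff i k} ∪ {g | ∃ v ∈ P.X, g = transl v})

/-- the dominant Weyl chamber `C` -/
def domC : Set V := {x | ∀ i, P.isPos i → 0 < P.root i x}

/-- the base alcove `ā` in the antidominant chamber -/
def baseAlc : Set V := {x | ∀ i, P.isPos i → P.root i x ∈ Set.Ioo (-1 : ℝ) 0}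

/-- `μ` is a dominant cocharacter -/
def Dominant (μ : V) : Prop := μ ∈ P.X ∧ ∀ i, P.isPos i → 0 ≤ P.root i μ

/-- dominance order: `ν ⪯ μ` iff `μ - ν` is a nonnegative integral combination
of positive coroots -/
def domOrder (ν μ : V) : Prop :=
  ∃ c : P.ι → ℕ, (∀ i, ¬ P.isPos i → c i = 0) ∧
    μ - ν = ∑ i, (c i : ℝ) • P.coroot i

/-- the root `α_i ∘ w` is positive on the dominant chamber, i.e. `α_i` is positive
deep inside the chamber `wC` -/
def PosOn (w : V ≃ₗ[ℝ] V) (i : P.ι) : Prop := ∀ c ∈ P.domC, 0 < P.root i (w c)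

/-- `H^{w+}`: the (open) side of `H_{α_i + k}` containing all alcoves sufficiently deep
inside the Weyl chamber `wC` -/
def wPlus (w : V ≃ₗ[ℝ] V) (i : P.ι) (k : ℤ) : Set V :=
  if P.PosOn w i then {x | 0 < P.root i x + k} else {x | P.root i x + (k : ℝ) < 0}

/-- `H^{w-}`: the side of `H_{α_i + k}` opposite to `H^{w+}` -/
def wMinus (w : V ≃ₗ[ℝ] V) (i : P.ι) (k : ℤ) : Set V :=
  if P.PosOn w i then {x | P.root i x + (k : ℝ) < 0} else {x | 0 < P.root i x + k}

/-- a single affine reflection applied to a subset of `V`, in the `w`-opposite direction -/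
def StepOpp (w : V ≃ₗ[ℝ] V) (A A' : Set V) : Prop :=
  ∃ i k, A' = P.sAff i k '' A ∧ A ⊆ P.wPlus w i k ∧ A' ⊆ P.wMinus w i k

/-- `B` is obtained from `A` by a sequence of affine reflections in the `w`-opposite
direction; so `x(ā) ∈ B(t_{wμ}(ā), w)` iff `ReachOpp w (t_{wμ}(ā)) (x(ā))`. -/
def ReachOpp (w : V ≃ₗ[ℝ] V) : Set V → Set V → Prop := Relation.ReflTransGen (P.StepOpp w)

/-- a single affine reflection applied to a point, in the `w`-opposite direction -/
def StepOppPt (w : V ≃ₗ[ℝ] V) (p q : V) : Prop :=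
  ∃ i k, q = P.sAff i k p ∧ p ∈ P.wPlus w i k ∧ q ∈ P.wMinus w i k

/-- `q ∈ B(p, w)`: the point `q` is obtained from `p` by a sequence of affine
reflections in the `w`-opposite direction -/
def ReachOppPt (w : V ≃ₗ[ℝ] V) : V → V → Prop := Relation.ReflTransGen (P.StepOppPt w)

/-- the affine hyperplane `H_{α_i + k}` -/
def hyp (i : P.ι) (k : ℤ) : Set V := {x | P.root i x + k = 0}

/-- the hyperplane `H_{α_i + k}` separates `A` and `B` -/
def Sep (i : P.ι) (k : ℤ) (A B : Set V) : Prop :=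
  (A ⊆ {x | 0 < P.root i x + k} ∧ B ⊆ {x | P.root i x + (k : ℝ) < 0}) ∨
  (B ⊆ {x | 0 < P.root i x + k} ∧ A ⊆ {x | P.root i x + (k : ℝ) < 0})

/-- the length of `x`: the number of affine root hyperplanes separating the base
alcove `ā` from `x(ā)` -/
noncomputable def lenA (x : V ≃ᵃ[ℝ] V) : ℕ :=
  Set.ncard {p : P.ι × ℤ | P.isPos p.1 ∧ P.Sep p.1 p.2 P.baseAlc (⇑x '' P.baseAlc)}

/-- the Bruhat order on the (extended) affine Weyl group, defined by the base alcove `ā`: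
generated by multiplication by affine reflections which increase the length -/
def BruhatLE : (V ≃ᵃ[ℝ] V) → (V ≃ᵃ[ℝ] V) → Prop :=
  Relation.ReflTransGen (fun u v => (∃ i k, v = P.sAff i k * u) ∧ P.lenA u < P.lenA v)

/-- `x ∈ W_aff τ_μ` -/
def InWaffCoset (μ : V) (x : V ≃ᵃ[ℝ] V) : Prop := ∃ u ∈ P.Waff, x = u * transl μ

/-- the `μ`-admissible set `Adm(μ)` -/
def Adm (μ : V) : Set (V ≃ᵃ[ℝ] V) :=
  {x | P.InWaffCoset μ x ∧ ∃ w ∈ P.Wfin, P.BruhatLE x (transl (w μ))}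

/-- the strongly admissible set `Adm^{st}(μ) = ∩_{w ∈ W} B(t_{wμ}(ā), w)` -/
def AdmSt (μ : V) : Set (V ≃ᵃ[ℝ] V) :=
  {x | P.InWaffCoset μ x ∧
    ∀ w ∈ P.Wfin, P.ReachOpp w (⇑(transl (w μ)) '' P.baseAlc) (⇑x '' P.baseAlc)}

/-- a gallery crossing in the `w`-direction: a reflection taking the alcove `A` to the
adjacent alcove `A'` across their common wall, from the `w-` side to the `w+` side -/
def StepDir (w : V ≃ₗ[ℝ] V) (A A' : Set V) : Prop :=
  ∃ i k, A' = P.sAff i k '' A ∧ A ⊆ P.wMinus w i k ∧ A' ⊆ P.wPlus w i k ∧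
    ∀ j m, P.isPos j → P.Sep j m A A' → P.hyp j m = P.hyp i k

/-- the acute cone `C(ā, w)`: alcoves reachable from `ā` by a gallery all of whose
crossings are in the `w`-direction -/
def InAcuteCone (w : V ≃ₗ[ℝ] V) (A : Set V) : Prop :=
  Relation.ReflTransGen (P.StepDir w) P.baseAlc A

/-- the set `S_aff` of simple affine reflections: affine reflections of length one -/
def SAffSet : Set (V ≃ᵃ[ℝ] V) := {g | (∃ i k, g = P.sAff i k) ∧ P.lenA g = 1}

/-- the subgroup `W_J` generated by `J ⊆ S_aff` -/
def WJ (J : Set (V ≃ᵃ[ℝ] V)) : Subgroup (V ≃ᵃ[ℝ] V) := Subgroup.closure J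

/-- the parahoric admissible set `Adm^J(μ) = W_J Adm(μ) W_J` -/
def AdmJ (μ : V) (J : Set (V ≃ᵃ[ℝ] V)) : Set (V ≃ᵃ[ℝ] V) :=
  {x | ∃ u ∈ WJ J, ∃ y ∈ P.Adm μ, ∃ v ∈ WJ J, x = u * y * v}

/-- the negative obtuse cone `B_0` generated by the negatives of the positive coroots -/
def obtuseCone : Set V :=
  {v | ∃ c : P.ι → ℝ, (∀ i, 0 ≤ c i) ∧
    v = ∑ i, if P.isPos i then c i • (-P.coroot i) else 0}

/-- the orbit `Wμ` -/
def orbit (μ : V) : Set V := {v | ∃ w ∈ P.Wfin, v = w μ}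

section Top

variable [TopologicalSpace V]

/-- an alcove: a connected component of the complement of the affine root hyperplanes -/
def IsAlcove (A : Set V) : Prop :=
  ∃ x ∈ (⋃ i, ⋃ k : ℤ, P.hyp i k)ᶜ,
    A = connectedComponentIn (⋃ i, ⋃ k : ℤ, P.hyp i k)ᶜ x

/-- `a` is a vertex of the base alcove `ā` whose type does not lie in `J`: a point of
`cl(ā)` fixed by every simple affine reflection except a single one `g ∉ J`. -/
def IsVertexTypeNotIn (J : Set (V ≃ᵃ[ℝ] V)) (a : V) : Prop :=
  a ∈ closure P.baseAlc ∧
    ∃ g ∈ P.SAffSet, g ∉ J ∧ (∀ h ∈ P.SAffSet, h ≠ g → h a = a) ∧ g a ≠ a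

/-- `H^+_{α̃}`: the side of the wall `H_{α_i+k}` containing the base alcove `ā` -/
def HplusBase (i : P.ι) (k : ℤ) : Set V :=
  if P.baseAlc ⊆ {x | 0 < P.root i x + k} then {x | 0 < P.root i x + k}
  else {x | P.root i x + (k : ℝ) < 0}

end Top

/-!
Two reflections in the parallel walls `H_{α+k}` and `H_{α+k+1}` compose to the translation by
`-α^∨`, and when `α = uβ` for a positive root `β`, both are in the `u`-opposite direction for the
right `k`. Iterating, `t_{uλ}(ā)` reaches `t_{u(λ-d)}(ā)` for every `d ∈ ℕR^∨₊`, so both claims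
reduce to the classical fact that `ν - wν ∈ ℕR^∨₊` for dominant `ν` (applied to `μ` and `w'⁻¹w`,
and to `ν` and `u⁻¹`).

That fact follows by induction on a word for `w` in simple reflections, using the exchange
condition. As the root system is only given by axioms, simple roots are taken to be the positive
roots that are not sums of two positive roots, positivity being read off at the regular dominant
point `-x` for any `x ∈ ā` (if `ā` is empty there is nothing to prove). The invariant form
`∑ α ⊗ α` provides the symmetry of the sign of `⟨α, β^∨⟩` and the bound `⟨α, β^∨⟩⟨β, α^∨⟩ ≤ 4`,
which show that a simple reflection permutes the other positive roots and that the simple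
reflections generate `W`.
-/

lemma sLin_apply (i : P.ι) (x : V) : P.sLin i x = x - P.root i x • P.coroot i :=
  Module.reflection_apply _ _

lemma sLin_sLin (i : P.ι) (x : V) : P.sLin i (P.sLin i x) = x :=
  Module.involutive_reflection (P.root_coroot_self i) x

lemma sLin_mul_self (i : P.ι) : P.sLin i * P.sLin i = 1 :=
  LinearEquiv.ext (P.sLin_sLin i)

lemma sLin_inv (i : P.ι) : (P.sLin i)⁻¹ = P.sLin i :=
  inv_eq_of_mul_eq_one_right (P.sLin_mul_self i)

lemma sLin_mem_Wfin (i : P.ι) : P.sLin i ∈ P.Wfin :=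
  Subgroup.subset_closure ⟨i, rfl⟩

lemma root_sLin_self (i : P.ι) (x : V) : P.root i (P.sLin i x) = -P.root i x := by
  rw [sLin_apply, map_sub, map_smul, P.root_coroot_self, smul_eq_mul]
  ring

lemma sAff_apply (i : P.ι) (k : ℤ) (x : V) :
    P.sAff i k x = P.sLin i x - (k : ℝ) • P.coroot i := by
  simp [sAff, sub_eq_add_neg, add_comm]

lemma root_sAff (i : P.ι) (k : ℤ) (x : V) :
    P.root i (P.sAff i k x) + k = -(P.root i x + k) := by
  rw [sAff_apply, map_sub, root_sLin_self, map_smul, P.root_coroot_self, smul_eq_mul]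
  ring

lemma sAff_add_one_sAff (i : P.ι) (k : ℤ) (x : V) :
    P.sAff i (k + 1) (P.sAff i k x) = x - P.coroot i := by
  simp only [sAff_apply, sLin_apply, map_sub, map_smul, P.root_coroot_self]
  push_cast
  module

lemma transl_apply (v x : V) : transl v x = v + x := rfl

lemma transl_zero : (transl 0 : V ≃ᵃ[ℝ] V) = 1 :=
  AffineEquiv.ext fun x => zero_add x

lemma transl_add (v w : V) : (transl (v + w) : V ≃ᵃ[ℝ] V) = transl v * transl w :=
  AffineEquiv.ext fun x => add_assoc v w x

lemma transl_neg (v : V) : (transl (-v) : V ≃ᵃ[ℝ] V) = (transl v)⁻¹ :=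
  eq_inv_of_mul_eq_one_left (by rw [← transl_add, neg_add_cancel, transl_zero])

lemma transl_neg_coroot (i : P.ι) (k : ℤ) :
    (transl (-P.coroot i) : V ≃ᵃ[ℝ] V) = P.sAff i (k + 1) * P.sAff i k :=
  AffineEquiv.ext fun x => by
    rw [AffineEquiv.coe_mul, Function.comp_apply, sAff_add_one_sAff, transl_apply, neg_add_eq_sub]

lemma exists_root_comp_eq {w : V ≃ₗ[ℝ] V} (hw : w ∈ P.Wfin) (i : P.ι) :
    ∃ m, (∀ x, P.root m (w x) = P.root i x) ∧ P.coroot m = w (P.coroot i) := by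
  have hgen : ∀ j i, ∃ m, (∀ x, P.root m (P.sLin j x) = P.root i x) ∧
      P.coroot m = P.sLin j (P.coroot i) := by
    intro j i
    obtain ⟨m, hm, hm'⟩ := P.refl_root j i
    refine ⟨m, fun x => ?_, by rw [hm', sLin_apply]⟩
    simp only [hm, LinearMap.sub_apply, LinearMap.smul_apply, sLin_apply (x := x), map_sub,
      map_smul, smul_eq_mul, P.root_coroot_self]
    ring
  induction hw using Subgroup.closure_induction'' generalizing i with
  | mem _ hs => obtain ⟨j, rfl⟩ := hs; exact hgen j i
  | inv_mem _ hs => obtain ⟨j, rfl⟩ := hs; rw [sLin_inv]; exact hgen j i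
  | one => exact ⟨i, fun _ => rfl, rfl⟩
  | mul v w _ _ ihv ihw =>
    obtain ⟨m, hm, hm'⟩ := ihw i
    obtain ⟨m', hm₁, hm₁'⟩ := ihv m
    exact ⟨m', fun x => (hm₁ _).trans (hm x), by rw [hm₁', hm']; rfl⟩

lemma exists_root_eq_comp {w : V ≃ₗ[ℝ] V} (hw : w ∈ P.Wfin) (i : P.ι) :
    ∃ m, (∀ x, P.root m x = P.root i (w x)) ∧ P.coroot m = w⁻¹ (P.coroot i) := by
  obtain ⟨m, hm, hm'⟩ := P.exists_root_comp_eq (inv_mem hw) i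
  exact ⟨m, fun x => by simpa using hm (w x), hm'⟩

lemma sLin_eq_conj {w : V ≃ₗ[ℝ] V} {i m : P.ι} (hr : ∀ x, P.root m x = P.root i (w x))
    (hc : P.coroot m = w⁻¹ (P.coroot i)) : P.sLin m = w⁻¹ * P.sLin i * w :=
  LinearEquiv.ext fun x => by
    simp only [LinearEquiv.mul_apply, sLin_apply, map_sub, map_smul, hr, hc]
    simp

/-! ### Translations in `W_aff` -/

def corootLattice : AddSubgroup V := AddSubgroup.closure (Set.range P.coroot)

lemma mem_X_and_sub_mem_corootLattice {w : V ≃ₗ[ℝ] V} (hw : w ∈ P.Wfin) {x : V} (hx : x ∈ P.X) :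
    w x ∈ P.X ∧ w x - x ∈ P.corootLattice := by
  have hgen : ∀ i, ∀ x ∈ P.X, P.sLin i x ∈ P.X ∧ P.sLin i x - x ∈ P.corootLattice := by
    intro i x hx
    obtain ⟨n, hn⟩ := P.root_int i x hx
    have h : P.sLin i x - x = (-n) • P.coroot i := by
      rw [sLin_apply, hn]; module
    refine ⟨?_, h ▸ zsmul_mem (AddSubgroup.subset_closure (Set.mem_range_self i)) _⟩
    rw [← sub_add_cancel (P.sLin i x) x, h]
    exact add_mem (zsmul_mem (P.coroot_mem i) _) hx
  induction hw using Subgroup.closure_induction'' generalizing x with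
  | mem _ hs => obtain ⟨i, rfl⟩ := hs; exact hgen i x hx
  | inv_mem _ hs => obtain ⟨i, rfl⟩ := hs; rw [sLin_inv]; exact hgen i x hx
  | one => simp [hx]
  | mul v w _ _ ihv ihw =>
    obtain ⟨hwx, hwx'⟩ := ihw hx
    obtain ⟨hvwx, hvwx'⟩ := ihv hwx
    exact ⟨hvwx, by simpa using add_mem hvwx' hwx'⟩

lemma transl_mem_Waff {v : V} (hv : v ∈ P.corootLattice) : transl v ∈ P.Waff := by
  induction hv using AddSubgroup.closure_induction with
  | mem _ hv =>
    obtain ⟨i, rfl⟩ := hv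
    rw [← neg_neg (P.coroot i), transl_neg, P.transl_neg_coroot i 0]
    exact inv_mem <|
      mul_mem (Subgroup.subset_closure ⟨i, _, rfl⟩) (Subgroup.subset_closure ⟨i, 0, rfl⟩)
  | zero => rw [transl_zero]; exact one_mem _
  | add v w _ _ hv hw => rw [transl_add]; exact mul_mem hv hw
  | neg v _ hv => rw [transl_neg]; exact inv_mem hv

lemma inWaffCoset_transl {w : V ≃ₗ[ℝ] V} (hw : w ∈ P.Wfin) {μ : V} (hμ : μ ∈ P.X) :
    P.InWaffCoset μ (transl (w μ)) :=
  ⟨transl (w μ - μ), P.transl_mem_Waff (P.mem_X_and_sub_mem_corootLattice hw hμ).2,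
    by rw [← transl_add, sub_add_cancel]⟩

/-! ### Galleries between translated alcoves -/

def posCoroots : AddSubmonoid V := AddSubmonoid.closure (P.coroot '' {i | P.isPos i})

lemma stepOpp_sAff {u : V ≃ₗ[ℝ] V} {A : Set V} {i : P.ι} {k : ℤ} (h : A ⊆ P.wPlus u i k) :
    P.StepOpp u A (P.sAff i k '' A) := by
  refine ⟨i, k, rfl, h, ?_⟩
  rintro _ ⟨x, hx, rfl⟩
  have hx := h hx
  have := P.root_sAff i k x
  simp only [wPlus, wMinus] at hx ⊢
  split_ifs at hx ⊢ <;> simp only [Set.mem_ofPred_eq] at hx ⊢ <;> linarith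

lemma exists_int_forall_baseAlc (m : P.ι) :
    ∃ a : ℤ, ∀ y ∈ P.baseAlc, a < P.root m y ∧ P.root m y < a + 1 := by
  rcases P.pos_or_neg m with hm | ⟨j, hj, hr, -⟩
  · exact ⟨-1, fun y hy => by have := hy m hm; push_cast; constructor <;> linarith [this.1, this.2]⟩
  · refine ⟨0, fun y hy => ?_⟩
    have := hy j hj
    simp only [hr, LinearMap.neg_apply, Int.cast_zero, zero_add]
    constructor <;> linarith [this.1, this.2]

/-- The reflections in `H_{α+k}` and then `H_{α+k+1}` are both in the `u`-opposite direction
when the alcove lies between `H_{α+k}` and `H_{α+k-1}`. -/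
lemma reachOpp_transl_sub_coroot {u : V ≃ₗ[ℝ] V} {m : P.ι} (hm : P.PosOn u m) {lam : V}
    (hlam : ∃ n : ℤ, P.root m lam = n) :
    P.ReachOpp u (transl lam '' P.baseAlc) (transl (lam - P.coroot m) '' P.baseAlc) := by
  obtain ⟨n, hn⟩ := hlam
  obtain ⟨a, ha⟩ := P.exists_int_forall_baseAlc m
  set k : ℤ := -(n + a)
  set A := transl lam '' P.baseAlc
  have hwPlus (k : ℤ) : P.wPlus u m k = {x | 0 < P.root m x + k} := if_pos hm
  have hA : ∀ x ∈ A, 0 < P.root m x + k ∧ P.root m x + k < 1 := by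
    rintro _ ⟨y, hy, rfl⟩
    rw [transl_apply, map_add, hn]
    push_cast [k]
    constructor <;> linarith [ha y hy]
  have step₁ : P.StepOpp u A (P.sAff m k '' A) :=
    P.stepOpp_sAff (by rw [hwPlus]; exact fun x hx => (hA x hx).1)
  have step₂ : P.StepOpp u (P.sAff m k '' A) (P.sAff m (k + 1) '' (P.sAff m k '' A)) := by
    refine P.stepOpp_sAff ?_
    rw [hwPlus]
    rintro _ ⟨x, hx, rfl⟩
    have := P.root_sAff m k x
    simp only [Set.mem_ofPred_eq, Int.cast_add, Int.cast_one]
    linarith [(hA x hx).2]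
  have hend : P.sAff m (k + 1) '' (P.sAff m k '' A) = transl (lam - P.coroot m) '' P.baseAlc := by
    rw [Set.image_image, Set.image_image]
    refine Set.image_congr fun x _ => ?_
    rw [sAff_add_one_sAff, transl_apply, transl_apply]
    abel
  exact hend ▸ .tail (.single step₁) step₂

lemma reachOpp_transl_sub {u : V ≃ₗ[ℝ] V} (hu : u ∈ P.Wfin) {d : V} (hd : d ∈ P.posCoroots) :
    ∀ lam ∈ P.X, P.ReachOpp u (transl lam '' P.baseAlc) (transl (lam - u d) '' P.baseAlc) := by
  induction hd using AddSubmonoid.closure_induction_left with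
  | zero => simpa using fun _ _ => .refl
  | add_left _ hx y _ ih =>
    obtain ⟨i, hi, rfl⟩ := hx
    obtain ⟨m, hm, hm'⟩ := P.exists_root_comp_eq hu i
    have hpos : P.PosOn u m := fun c hc => (hm c).symm ▸ hc i hi
    intro lam hlam
    have step := P.reachOpp_transl_sub_coroot hpos (P.root_int m lam hlam)
    rw [hm'] at step
    have hlam' : lam - u (P.coroot i) ∈ P.X := sub_mem hlam (hm' ▸ P.coroot_mem m)
    have := step.trans (ih _ hlam')
    rwa [sub_sub, ← map_add] at this

lemma reachOpp_transl_of_sub_mem {u : V ≃ₗ[ℝ] V} (hu : u ∈ P.Wfin) {lam tgt : V} (hlam : lam ∈ P.X)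
    (h : lam - u⁻¹ tgt ∈ P.posCoroots) :
    P.ReachOpp u (transl (u lam) '' P.baseAlc) (transl tgt '' P.baseAlc) := by
  simpa using P.reachOpp_transl_sub hu h _ (P.mem_X_and_sub_mem_corootLattice hu hlam).1

/-! ### Roots and coroots -/

noncomputable def rootSet : Finset (V →ₗ[ℝ] ℝ) := Finset.univ.image P.root

/-- `∑ α ⊗ α` over the distinct root functionals, which `W` permutes -/
noncomputable def invForm : LinearMap.BilinForm ℝ V :=
  ∑ f ∈ P.rootSet, (LinearMap.mul ℝ ℝ).compl₁₂ f f

lemma invForm_apply (x y : V) : P.invForm x y = ∑ f ∈ P.rootSet, f x * f y := by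
  simp [invForm, LinearMap.sum_apply]

lemma invForm_comm (x y : V) : P.invForm x y = P.invForm y x := by
  simp only [invForm_apply, mul_comm]

lemma invForm_self_nonneg (x : V) : 0 ≤ P.invForm x x := by
  rw [invForm_apply]
  exact Finset.sum_nonneg fun f _ => mul_self_nonneg _

lemma invForm_map {w : V ≃ₗ[ℝ] V} (hw : w ∈ P.Wfin) (x y : V) :
    P.invForm (w x) (w y) = P.invForm x y := by
  have hcomp {w : V ≃ₗ[ℝ] V} (hw : w ∈ P.Wfin) {f} (hf : f ∈ P.rootSet) :
      f ∘ₗ w.toLinearMap ∈ P.rootSet := by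
    obtain ⟨i, -, rfl⟩ := Finset.mem_image.1 hf
    obtain ⟨m, hm, -⟩ := P.exists_root_eq_comp hw i
    exact Finset.mem_image.2 ⟨m, Finset.mem_univ _, LinearMap.ext hm⟩
  rw [invForm_apply, invForm_apply]
  refine Finset.sum_nbij' (fun f => f ∘ₗ w.toLinearMap) (fun f => f ∘ₗ (w⁻¹).toLinearMap)
    (fun f hf => hcomp hw hf) (fun f hf => hcomp (inv_mem hw) hf) (fun f _ => ?_) (fun f _ => ?_)
    (fun f _ => rfl)
  all_goals ext x; simp

lemma two_mul_invForm_coroot (i : P.ι) (x : V) :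
    2 * P.invForm (P.coroot i) x = P.root i x * P.invForm (P.coroot i) (P.coroot i) := by
  have h := P.invForm_map (P.sLin_mem_Wfin i) (P.coroot i) x
  rw [sLin_apply (x := P.coroot i), sLin_apply, P.root_coroot_self] at h
  simp only [map_sub, map_smul, LinearMap.sub_apply, LinearMap.smul_apply, smul_eq_mul] at h
  linarith

lemma invForm_coroot_self_pos (i : P.ι) : 0 < P.invForm (P.coroot i) (P.coroot i) := by
  have h := Finset.single_le_sum (fun f _ => mul_self_nonneg (f (P.coroot i)))
    (Finset.mem_image_of_mem P.root (Finset.mem_univ i))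
  rw [P.root_coroot_self] at h
  rw [invForm_apply]
  exact lt_of_lt_of_le (by norm_num) h

lemma pairing_pos_symm {i j : P.ι} (h : 0 < P.root i (P.coroot j)) : 0 < P.root j (P.coroot i) := by
  have h₁ := P.two_mul_invForm_coroot i (P.coroot j)
  have h₂ := P.two_mul_invForm_coroot j (P.coroot i)
  rw [invForm_comm] at h₂
  have := P.invForm_coroot_self_pos i
  have := P.invForm_coroot_self_pos j
  nlinarith

/-- Cauchy–Schwarz for the invariant form. -/
lemma pairing_mul_pairing_le_four (i j : P.ι) :
    P.root i (P.coroot j) * P.root j (P.coroot i) ≤ 4 := by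
  have h₁ := P.two_mul_invForm_coroot i (P.coroot j)
  have h₂ := P.two_mul_invForm_coroot j (P.coroot i)
  rw [invForm_comm] at h₂
  have hA := P.invForm_coroot_self_pos i
  have hz := P.invForm_self_nonneg ((2 : ℝ) • P.coroot i - P.root j (P.coroot i) • P.coroot j)
  simp only [map_sub, map_smul, LinearMap.sub_apply, LinearMap.smul_apply, smul_eq_mul,
    P.invForm_comm (P.coroot j) (P.coroot i)] at hz
  by_contra! hlt
  nlinarith [mul_lt_mul_of_pos_left hlt hA, congrArg (P.root j (P.coroot i) * ·) h₁,
    congrArg (P.root j (P.coroot i) * ·) h₂]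

lemma eq_zero_of_forall_exists_eq_add_smul {ι M : Type*} [Finite ι] [AddCommGroup M] [Module ℝ M]
    (g : ι → M) {a v : M} (h : ∀ n : ℕ, ∃ i, g i = a + (n : ℝ) • v) : v = 0 := by
  by_contra hv
  refine (Set.finite_range g).not_infinite (Set.infinite_of_injective_forall_mem
    (f := fun n : ℕ => a + (n : ℝ) • v) (fun m n hmn => ?_) h)
  exact Nat.cast_injective (smul_left_injective ℝ hv (add_left_cancel hmn))

/-- Two roots pairing to `2` with each other's coroots coincide: otherwise `s_α s_β` would
produce the infinitely many roots `α + 2n(α - β)`, and coroots `α^∨ + 2n(α^∨ - β^∨)`. -/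
lemma eq_of_pairing_eq_two {i j : P.ι} (hij : P.root i (P.coroot j) = 2)
    (hji : P.root j (P.coroot i) = 2) : P.root i = P.root j ∧ P.coroot i = P.coroot j := by
  have hi := P.root_coroot_self i
  have hj := P.root_coroot_self j
  constructor
  · suffices (2 : ℝ) • (P.root i - P.root j) = 0 by simpa [sub_eq_zero] using this
    refine eq_zero_of_forall_exists_eq_add_smul P.root (a := P.root i) fun n => ?_
    induction n with
    | zero => exact ⟨i, by simp⟩
    | succ n ih =>
      obtain ⟨m, hm⟩ := ih
      obtain ⟨m₁, hm₁, -⟩ := P.refl_root j m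
      obtain ⟨m₂, hm₂, -⟩ := P.refl_root i m₁
      refine ⟨m₂, ?_⟩
      rw [hm₂, hm₁, hm]
      simp only [LinearMap.add_apply, LinearMap.sub_apply, LinearMap.smul_apply, smul_eq_mul,
        hi, hj, hij, hji]
      push_cast
      module
  · suffices (2 : ℝ) • (P.coroot i - P.coroot j) = 0 by simpa [sub_eq_zero] using this
    refine eq_zero_of_forall_exists_eq_add_smul P.coroot (a := P.coroot i) fun n => ?_
    induction n with
    | zero => exact ⟨i, by simp⟩
    | succ n ih =>
      obtain ⟨m, hm⟩ := ih
      obtain ⟨m₁, -, hm₁⟩ := P.refl_root j m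
      obtain ⟨m₂, -, hm₂⟩ := P.refl_root i m₁
      refine ⟨m₂, ?_⟩
      rw [hm₂, hm₁, hm]
      simp only [map_add, map_sub, map_smul, smul_eq_mul, hi, hj, hij, hji]
      push_cast
      module

lemma coroot_eq_of_root_eq {i j : P.ι} (h : P.root i = P.root j) : P.coroot i = P.coroot j :=
  (P.eq_of_pairing_eq_two (by rw [h, P.root_coroot_self]) (by rw [← h, P.root_coroot_self])).2

lemma sLin_eq_of_root_eq {i j : P.ι} (h : P.root i = P.root j) : P.sLin i = P.sLin j :=
  LinearEquiv.ext fun x => by rw [sLin_apply, sLin_apply, h, P.coroot_eq_of_root_eq h]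

lemma sLin_eq_of_root_neg {i j : P.ι} (hr : P.root i = -P.root j) (hc : P.coroot i = -P.coroot j) :
    P.sLin i = P.sLin j :=
  LinearEquiv.ext fun x => by simp [sLin_apply, hr, hc]

lemma induction_on_root_apply (x : V) {p : P.ι → Prop}
    (h : ∀ i, (∀ j, P.root j x < P.root i x → p j) → p i) (i : P.ι) : p i := by
  have : IsTrans P.ι (fun j i => P.root j x < P.root i x) := ⟨fun _ _ _ => lt_trans⟩
  have : Std.Irrefl (fun j i : P.ι => P.root j x < P.root i x) := ⟨fun _ => lt_irrefl _⟩
  exact (Finite.wellFounded_of_trans_of_irrefl _).induction i h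

variable {cc : V}

lemma root_neg_of_not_isPos (hcc : cc ∈ P.domC) {i : P.ι} (hi : ¬P.isPos i) : P.root i cc < 0 := by
  obtain ⟨j, hj, hr, -⟩ := (P.pos_or_neg i).resolve_left hi
  simpa [hr] using hcc j hj

lemma isPos_iff (hcc : cc ∈ P.domC) {i : P.ι} : P.isPos i ↔ 0 < P.root i cc :=
  ⟨hcc i, fun h => by_contra fun hi => (P.root_neg_of_not_isPos hcc hi).not_gt h⟩

lemma root_apply_ne_zero (hcc : cc ∈ P.domC) {w : V ≃ₗ[ℝ] V} (hw : w ∈ P.Wfin) (i : P.ι) :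
    P.root i (w cc) ≠ 0 := by
  obtain ⟨m, hm, -⟩ := P.exists_root_eq_comp hw i
  rw [← hm]
  by_cases h : P.isPos m
  · exact (hcc m h).ne'
  · exact (P.root_neg_of_not_isPos hcc h).ne

def IsSimple (b : P.ι) : Prop :=
  P.isPos b ∧ ∀ i j, P.isPos i → P.isPos j → P.root b ≠ P.root i + P.root j

lemma exists_isSimple_pos (hcc : cc ∈ P.domC) {v : V} {i : P.ι} (hi : P.isPos i)
    (h : 0 < P.root i v) : ∃ b, P.IsSimple b ∧ 0 < P.root b v := by
  induction i using P.induction_on_root_apply cc with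
  | h i ih =>
    by_cases hs : P.IsSimple i
    · exact ⟨i, hs, h⟩
    obtain ⟨j, k, hj, hk, hijk⟩ :
        ∃ j k, P.isPos j ∧ P.isPos k ∧ P.root i = P.root j + P.root k := by
      simpa [IsSimple, hi] using hs
    have hval (x : V) : P.root i x = P.root j x + P.root k x := by rw [hijk, LinearMap.add_apply]
    rcases lt_or_ge 0 (P.root j v) with hjv | hjv
    · exact ih j (by linarith [hval cc, hcc k hk]) hj hjv
    · exact ih k (by linarith [hval cc, hcc j hj]) hk (by linarith [hval v])

lemma root_eq_of_two_le_pairing {i j : P.ι} (hij : 2 ≤ P.root i (P.coroot j))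
    (hji : 2 ≤ P.root j (P.coroot i)) : P.root i = P.root j := by
  have := P.pairing_mul_pairing_le_four i j
  exact (P.eq_of_pairing_eq_two (by nlinarith) (by nlinarith)).1

lemma exists_isPos_root_eq_sub {b : P.ι} (hb : P.IsSimple b) {j : P.ι} (hj : P.isPos j)
    (h : P.root b (P.coroot j) = 1) : ∃ m, P.isPos m ∧ P.root m = P.root j - P.root b := by
  obtain ⟨m, hm, -⟩ := P.refl_root j b
  rw [h, one_smul] at hm
  by_cases hmpos : P.isPos m
  · exact absurd (by rw [hm]; abel) (hb.2 m j hmpos hj)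
  obtain ⟨m', hm', hmr, -⟩ := (P.pos_or_neg m).resolve_left hmpos
  exact ⟨m', hm', by rw [← neg_eq_iff_eq_neg.2 hmr, hm]; abel⟩

/-- `s_β α` is positive for positive `α ≠ β`, `β` simple. By induction on `⟨α, β^∨⟩`: a negative
`s_β α` would decompose `β`, either directly or through the positive root `s_β (α - β)`. -/
lemma isPos_of_root_eq_sub (hcc : cc ∈ P.domC) {b : P.ι} (hb : P.IsSimple b) {j : P.ι}
    (hj : P.isPos j) (hjb : P.root j ≠ P.root b) {m : P.ι}
    (hm : P.root m = P.root j - P.root j (P.coroot b) • P.root b) : P.isPos m := by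
  induction j using P.induction_on_root_apply (P.coroot b) generalizing m with
  | h j ih =>
    by_contra hmpos
    obtain ⟨n, hn⟩ := P.root_int j (P.coroot b) (P.coroot_mem b)
    have hn1 : 1 ≤ n := by
      have hmcc : P.root m cc = P.root j cc - n * P.root b cc := by rw [hm, ← hn]; rfl
      have : (0 : ℝ) < n := by
        nlinarith [P.root_neg_of_not_isPos hcc hmpos, hcc j hj, hcc b hb.1]
      exact_mod_cast this
    obtain ⟨m₂, hm₂, hm₂r, -⟩ := (P.pos_or_neg m).resolve_left hmpos
    have hm₂root : P.root m₂ = (n : ℝ) • P.root b - P.root j := by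
      rw [← neg_eq_iff_eq_neg.2 hm₂r, hm, hn]; abel
    rcases hn1.eq_or_lt with rfl | hn2
    · exact hb.2 j m₂ hj hm₂ (by rw [hm₂root]; simp)
    obtain ⟨k, hk⟩ := P.root_int b (P.coroot j) (P.coroot_mem j)
    have hk1 : k = 1 := by
      have : (0 : ℤ) < k := by
        exact_mod_cast hk ▸ P.pairing_pos_symm (by rw [hn]; exact_mod_cast hn1)
      by_contra hk1
      exact hjb (P.root_eq_of_two_le_pairing (by rw [hn]; exact_mod_cast (by omega : (2 : ℤ) ≤ n))
        (by rw [hk]; exact_mod_cast (by omega : (2 : ℤ) ≤ k)))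
    obtain ⟨m₄, hm₄, hm₄root⟩ := P.exists_isPos_root_eq_sub hb hj (by rw [hk, hk1, Int.cast_one])
    have hm₄b : P.root m₄ ≠ P.root b := fun h => by
      have h2 : P.root j = (2 : ℝ) • P.root b := by
        rw [two_smul, ← sub_eq_iff_eq_add, ← hm₄root, h]
      rcases P.reduced j b 2 h2 with h | h
      · exact hjb h
      · have := hcc j hj; rw [h, LinearMap.neg_apply] at this; linarith [hcc b hb.1]
    have hm₄pair : P.root m₄ (P.coroot b) = n - 2 := by
      rw [hm₄root, LinearMap.sub_apply, hn, P.root_coroot_self]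
    obtain ⟨m₅, hm₅, -⟩ := P.refl_root b m₄
    have hm₅pos := ih m₄ (by rw [hm₄pair, hn]; linarith) hm₄ hm₄b hm₅
    refine hb.2 m₅ m₂ hm₅pos hm₂ ?_
    rw [hm₅, hm₄pair, hm₄root, hm₂root]
    module

/-! ### Simple reflections and the exchange condition -/

def simpleRefls : Set (V ≃ₗ[ℝ] V) := P.sLin '' {b | P.IsSimple b}

lemma list_prod_mem_Wfin {l : List (V ≃ₗ[ℝ] V)} (hl : ∀ s ∈ l, s ∈ P.simpleRefls) :
    l.prod ∈ P.Wfin :=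
  Subgroup.list_prod_mem _ fun s hs => by
    obtain ⟨b, -, rfl⟩ := hl s hs
    exact P.sLin_mem_Wfin b

lemma sLin_mem_closure_simpleRefls_of_isPos (hcc : cc ∈ P.domC) {i : P.ι} (hi : P.isPos i) :
    P.sLin i ∈ Submonoid.closure P.simpleRefls := by
  induction i using P.induction_on_root_apply cc with
  | h i ih =>
    by_cases hs : P.IsSimple i
    · exact Submonoid.subset_closure ⟨i, hs, rfl⟩
    obtain ⟨b, hb, hbi⟩ := P.exists_isSimple_pos hcc hi (v := P.coroot i)
      (by rw [P.root_coroot_self]; norm_num)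
    have hb_mem : P.sLin b ∈ Submonoid.closure P.simpleRefls :=
      Submonoid.subset_closure ⟨b, hb, rfl⟩
    by_cases hib : P.root i = P.root b
    · rwa [P.sLin_eq_of_root_eq hib]
    obtain ⟨m, hm, hm'⟩ := P.refl_root b i
    have hmpos := P.isPos_of_root_eq_sub hcc hb hi hib hm
    have hlt : P.root m cc < P.root i cc := by
      have := mul_pos (P.pairing_pos_symm hbi) (hcc b hb.1)
      rw [hm]; simp only [LinearMap.sub_apply, LinearMap.smul_apply, smul_eq_mul]; linarith
    have hconj : P.sLin m = (P.sLin b)⁻¹ * P.sLin i * P.sLin b := by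
      refine P.sLin_eq_conj (fun x => ?_) (by rw [sLin_inv, hm', sLin_apply])
      simp only [hm, sLin_apply, LinearMap.sub_apply, LinearMap.smul_apply, map_sub, map_smul,
        smul_eq_mul]
      ring
    have : P.sLin i = P.sLin b * P.sLin m * (P.sLin b)⁻¹ := by rw [hconj]; group
    rw [this, sLin_inv]
    exact mul_mem (mul_mem hb_mem (ih m hlt hmpos)) hb_mem

lemma mem_closure_simpleRefls (hcc : cc ∈ P.domC) {w : V ≃ₗ[ℝ] V} (hw : w ∈ P.Wfin) :
    w ∈ Submonoid.closure P.simpleRefls := by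
  have hgen (i : P.ι) : P.sLin i ∈ Submonoid.closure P.simpleRefls := by
    rcases P.pos_or_neg i with hi | ⟨j, hj, hr, hc⟩
    · exact P.sLin_mem_closure_simpleRefls_of_isPos hcc hi
    · rw [P.sLin_eq_of_root_neg hr hc]
      exact P.sLin_mem_closure_simpleRefls_of_isPos hcc hj
  induction hw using Subgroup.closure_induction'' with
  | mem _ hs => obtain ⟨i, rfl⟩ := hs; exact hgen i
  | inv_mem _ hs => obtain ⟨i, rfl⟩ := hs; rw [sLin_inv]; exact hgen i
  | one => exact one_mem _
  | mul _ _ _ _ hv hw => exact mul_mem hv hw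

/-- If the simple reflection `s_γ` turns the positive root `α ∘ v` negative, then
`α ∘ v = γ`, so that `s_γ = v⁻¹ s_α v`. -/
lemma sLin_mul_mul_sLin_eq (hcc : cc ∈ P.domC) {b c : P.ι} (hc : P.IsSimple c)
    {v : V ≃ₗ[ℝ] V} (hv : v ∈ P.Wfin) (h₁ : 0 < P.root b (v cc))
    (h₂ : P.root b (v (P.sLin c cc)) < 0) : P.sLin b * v * P.sLin c = v := by
  obtain ⟨j, hj, hj'⟩ := P.exists_root_eq_comp hv b
  have hjc : P.root j = P.root c := by
    by_contra hjc
    obtain ⟨m, hm, -⟩ := P.refl_root c j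
    have hmpos := P.isPos_of_root_eq_sub hcc hc ((P.isPos_iff hcc).2 (by rwa [hj])) hjc hm
    have : P.root m cc = P.root b (v (P.sLin c cc)) := by
      rw [← hj, hm, sLin_apply]
      simp only [LinearMap.sub_apply, LinearMap.smul_apply, map_sub, map_smul, smul_eq_mul]
      ring
    exact (hcc m hmpos).not_gt (this ▸ h₂)
  rw [← P.sLin_eq_of_root_eq hjc, P.sLin_eq_conj hj hj', ← mul_assoc, ← mul_assoc,
    mul_inv_cancel_right, sLin_mul_self, one_mul]

lemma exists_exchange (hcc : cc ∈ P.domC) {b : P.ι} (hb : P.isPos b) {t : List (V ≃ₗ[ℝ] V)}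
    (ht : ∀ s ∈ t, s ∈ P.simpleRefls) (h : P.root b (t.prod cc) < 0) :
    ∃ t' : List (V ≃ₗ[ℝ] V), (∀ s ∈ t', s ∈ P.simpleRefls) ∧ t'.length < t.length ∧
      P.sLin b * t.prod = t'.prod := by
  induction t using List.reverseRecOn with
  | nil => exact absurd (hcc b hb) (by simpa using h.not_gt)
  | append_singleton t s ih =>
    obtain ⟨c, hc, rfl⟩ := ht s (by simp)
    have ht₀ : ∀ s ∈ t, s ∈ P.simpleRefls := fun s hs => ht s (by simp [hs])
    rw [List.prod_append, List.prod_singleton] at h ⊢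
    rcases lt_trichotomy (P.root b (t.prod cc)) 0 with hneg | hzero | hpos
    · obtain ⟨t', ht', hlen, heq⟩ := ih ht₀ hneg
      refine ⟨t' ++ [P.sLin c], fun s hs => ?_, by simpa using hlen, ?_⟩
      · rcases List.mem_append.1 hs with hs | hs
        · exact ht' s hs
        · exact (List.mem_singleton.1 hs) ▸ ⟨c, hc, rfl⟩
      · rw [List.prod_append, List.prod_singleton, ← heq, mul_assoc]
    · exact absurd hzero (P.root_apply_ne_zero hcc (P.list_prod_mem_Wfin ht₀) b)
    · exact ⟨t, ht₀, by simp, P.sLin_mul_mul_sLin_eq hcc hc (P.list_prod_mem_Wfin ht₀) hpos h⟩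

lemma sub_mem_posCoroots_of_domOrder {ν μ : V} (h : P.domOrder ν μ) : μ - ν ∈ P.posCoroots := by
  obtain ⟨c, hc, h⟩ := h
  rw [h]
  refine AddSubmonoid.sum_mem _ fun i _ => ?_
  by_cases hi : P.isPos i
  · rw [Nat.cast_smul_eq_nsmul]
    exact nsmul_mem (AddSubmonoid.subset_closure (Set.mem_image_of_mem _ hi)) _
  · simp [hc i hi]

lemma smul_coroot_mem_posCoroots {b : P.ι} (hb : P.isPos b) {x : V} (hx : x ∈ P.X)
    (h : 0 ≤ P.root b x) : P.root b x • P.coroot b ∈ P.posCoroots := by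
  obtain ⟨n, hn⟩ := P.root_int b x hx
  lift n to ℕ using by exact_mod_cast hn ▸ h
  rw [hn, Int.cast_natCast, Nat.cast_smul_eq_nsmul]
  exact nsmul_mem (AddSubmonoid.subset_closure (Set.mem_image_of_mem _ hb)) _

lemma sub_list_prod_mem_posCoroots (hcc : cc ∈ P.domC) {ν : V} (hν : P.Dominant ν)
    (t : List (V ≃ₗ[ℝ] V)) (ht : ∀ s ∈ t, s ∈ P.simpleRefls) : ν - t.prod ν ∈ P.posCoroots := by
  induction h : t.length using Nat.strong_induction_on generalizing t with
  | _ n ih =>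
    subst h
    cases t with
    | nil => simp
    | cons s t =>
      obtain ⟨b, hb, rfl⟩ := ht s (by simp)
      have ht₀ : ∀ s ∈ t, s ∈ P.simpleRefls := fun s hs => ht s (by simp [hs])
      rw [List.prod_cons]
      rcases lt_trichotomy (P.root b (t.prod cc)) 0 with hneg | hzero | hpos
      · obtain ⟨t', ht', hlen, heq⟩ := P.exists_exchange hcc hb.1 ht₀ hneg
        rw [heq]
        exact ih _ (by simp only [List.length_cons]; omega) t' ht' rfl
      · exact absurd hzero (P.root_apply_ne_zero hcc (P.list_prod_mem_Wfin ht₀) b)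
      · obtain ⟨j, hj, -⟩ := P.exists_root_eq_comp (P.list_prod_mem_Wfin ht₀) b
        have hroot : 0 ≤ P.root b (t.prod ν) := hj ν ▸ hν.2 j ((P.isPos_iff hcc).2 (hj cc ▸ hpos))
        have hX := (P.mem_X_and_sub_mem_corootLattice (P.list_prod_mem_Wfin ht₀) hν.1).1
        rw [LinearEquiv.mul_apply, sLin_apply, sub_sub_eq_add_sub, add_sub_right_comm]
        exact add_mem (ih _ (by simp) t ht₀ rfl) (P.smul_coroot_mem_posCoroots hb.1 hX hroot)

lemma sub_mem_posCoroots (hcc : cc ∈ P.domC) {w : V ≃ₗ[ℝ] V} (hw : w ∈ P.Wfin) {ν : V}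
    (hν : P.Dominant ν) : ν - w ν ∈ P.posCoroots := by
  obtain ⟨t, ht, rfl⟩ := Submonoid.exists_list_of_mem_closure (P.mem_closure_simpleRefls hcc hw)
  exact P.sub_list_prod_mem_posCoroots hcc hν t ht

lemma neg_mem_domC {x : V} (hx : x ∈ P.baseAlc) : -x ∈ P.domC := fun i hi => by
  simpa using (hx i hi).2

/-- For every `w ∈ W`, the translation `t_{wμ}` is strongly admissible; more precisely,
for every `u ∈ W` and every dominant `ν ⪯ μ`, some sequence of affine reflections in
the `u`-opposite direction carries `t_{uμ}(ā)` to `t_ν(ā)`. -/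
theorem transl_mem_admSt (μ : V) (hμ : P.Dominant μ) :
    (∀ w ∈ P.Wfin, transl (w μ) ∈ P.AdmSt μ) ∧
    (∀ u ∈ P.Wfin, ∀ ν : V, P.Dominant ν → P.domOrder ν μ →
      P.ReachOpp u (⇑(transl (u μ)) '' P.baseAlc) (⇑(transl ν) '' P.baseAlc)) := by
  rcases P.baseAlc.eq_empty_or_nonempty with hā | ⟨x, hx⟩
  · have hrefl (u : V ≃ₗ[ℝ] V) (v v' : V) :
        P.ReachOpp u (transl v '' P.baseAlc) (transl v' '' P.baseAlc) := by
      simp only [hā, Set.image_empty]; exact .refl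
    exact ⟨fun w hw => ⟨P.inWaffCoset_transl hw hμ.1, fun _ _ => hrefl ..⟩,
      fun _ _ _ _ _ => hrefl ..⟩
  have hcc := P.neg_mem_domC hx
  refine ⟨fun w hw => ⟨P.inWaffCoset_transl hw hμ.1, fun w' hw' => ?_⟩, fun u hu ν hν hνμ => ?_⟩
  · exact P.reachOpp_transl_of_sub_mem hw' hμ.1
      (P.sub_mem_posCoroots hcc (mul_mem (inv_mem hw') hw) hμ)
  · refine P.reachOpp_transl_of_sub_mem hu hμ.1 ?_
    rw [← sub_add_sub_cancel μ ν]
    exact add_mem (P.sub_mem_posCoroots_of_domOrder hνμ) (P.sub_mem_posCoroots hcc (inv_mem hu) hν)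

end BasedRootSystem

end Paper
end
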